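/- The sequence a_n = (n² + n + 1/4) − (n² + n + 1/3)·sinc(π/(2n+1)), for n ≥ 1, is increasing and converges to (π² − 2)/24; moreover 0.32 ≤ a_1 and (π² − 2)/24 ≤ 0.33. -/

import Mathlib

/-!
Put `m = 2n + 1`, so that `a_n = m²/4 - (m²/4 + 1/12) sinc (π/m)`. On `[0, ∞)` the Taylor
polynomials of `sin` alternately over- and underestimate it, so those of degree 5 and 7 trap
`a_n` between two polynomials in `u = m⁻²` that differ by `O(u²)` and have constant term
`(π² - 2)/24`; this gives the limit. The lower polynomial decreases in `u` with slope at least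
`π⁴/480 - π²/72 > 0`, and going from `m` to `m + 2` lowers `u` by more than `u²`, which
outweighs the gap between the two polynomials: the upper bound for `a_n` lies below the lower
bound for `a_{n+1}`.
-/
open Real Filter

noncomputable def seqA (n : ℕ) : ℝ :=
  ((n : ℝ)^2 + n + 1/4) -
    ((n : ℝ)^2 + n + 1/3) * (Real.sin (Real.pi / (2 * n + 1)) / (Real.pi / (2 * n + 1)))

theorem nonneg_of_hasDerivAt_nonneg {g g' : ℝ → ℝ} (hg : ∀ x, HasDerivAt g (g' x) x)
    (hg0 : g 0 = 0) (hg' : ∀ x, 0 ≤ x → 0 ≤ g' x) {x : ℝ} (hx : 0 ≤ x) : 0 ≤ g x :=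
  hg0 ▸ monotoneOn_of_hasDerivWithinAt_nonneg (convex_Ici 0)
    (fun y _ => (hg y).continuousAt.continuousWithinAt) (fun y _ => (hg y).hasDerivWithinAt)
    (fun y hy => hg' y (interior_subset hy)) Set.self_mem_Ici hx hx

namespace Real
open Finset Nat

noncomputable def sinTaylor (k : ℕ) (x : ℝ) : ℝ :=
  ∑ i ∈ range k, (-1) ^ i * x ^ (2 * i + 1) / (2 * i + 1)!

noncomputable def cosTaylor (k : ℕ) (x : ℝ) : ℝ :=
  ∑ i ∈ range k, (-1) ^ i * x ^ (2 * i) / (2 * i)!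

theorem hasDerivAt_sinTaylor (k : ℕ) (x : ℝ) : HasDerivAt (sinTaylor k) (cosTaylor k x) x := by
  have term (i : ℕ) : HasDerivAt (fun y : ℝ => (-1) ^ i * y ^ (2 * i + 1) / (2 * i + 1)!)
      ((-1) ^ i * x ^ (2 * i) / (2 * i)!) x := by
    refine (((hasDerivAt_pow (2 * i + 1) x).const_mul ((-1 : ℝ) ^ i)).div_const
      ((2 * i + 1)! : ℝ)).congr_deriv ?_
    rw [factorial_succ]
    push_cast
    field_simp
  unfold sinTaylor cosTaylor
  exact HasDerivAt.fun_sum fun i _ => term i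

theorem hasDerivAt_cosTaylor_succ (k : ℕ) (x : ℝ) :
    HasDerivAt (cosTaylor (k + 1)) (-sinTaylor k x) x := by
  have term (i : ℕ) :
      HasDerivAt (fun y : ℝ => (-1) ^ (i + 1) * y ^ (2 * (i + 1)) / (2 * (i + 1))!)
      (-((-1) ^ i * x ^ (2 * i + 1) / (2 * i + 1)!)) x := by
    refine (((hasDerivAt_pow (2 * (i + 1)) x).const_mul ((-1 : ℝ) ^ (i + 1))).div_const
      ((2 * (i + 1))! : ℝ)).congr_deriv ?_
    rw [show 2 * (i + 1) = 2 * i + 1 + 1 by ring, factorial_succ]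
    push_cast
    field_simp
    ring
  unfold sinTaylor cosTaylor
  simp only [sum_range_succ', mul_zero, pow_zero, factorial_zero, cast_one, div_one, one_mul,
    ← sum_neg_distrib]
  exact (HasDerivAt.fun_sum fun i _ => term i).add_const 1

theorem neg_one_pow_mul_sin_sub_sinTaylor_nonneg_of_cos {k : ℕ}
    (hcos : ∀ y, 0 ≤ y → 0 ≤ (-1) ^ k * (cos y - cosTaylor k y)) {x : ℝ} (hx : 0 ≤ x) :
    0 ≤ (-1) ^ k * (sin x - sinTaylor k x) :=
  nonneg_of_hasDerivAt_nonneg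
    (fun y => ((hasDerivAt_sin y).sub (hasDerivAt_sinTaylor k y)).const_mul _)
    (by simp [sinTaylor]) hcos hx

theorem neg_one_pow_mul_cos_sub_cosTaylor_nonneg_of_sin {k : ℕ}
    (hsin : ∀ y, 0 ≤ y → 0 ≤ (-1) ^ k * (sin y - sinTaylor k y)) {x : ℝ} (hx : 0 ≤ x) :
    0 ≤ (-1) ^ (k + 1) * (cos x - cosTaylor (k + 1) x) :=
  nonneg_of_hasDerivAt_nonneg
    (fun y => (((hasDerivAt_cos y).sub (hasDerivAt_cosTaylor_succ k y)).const_mul _).congr_deriv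
      (by ring))
    (by simp [cosTaylor, sum_range_succ']) hsin hx

theorem neg_one_pow_mul_cos_sub_cosTaylor_nonneg (k : ℕ) {x : ℝ} (hx : 0 ≤ x) :
    0 ≤ (-1) ^ (k + 1) * (cos x - cosTaylor (k + 1) x) := by
  induction k generalizing x with
  | zero => simpa [cosTaylor] using cos_le_one x
  | succ k ih =>
    exact neg_one_pow_mul_cos_sub_cosTaylor_nonneg_of_sin
      (fun y hy => neg_one_pow_mul_sin_sub_sinTaylor_nonneg_of_cos (fun _ => ih) hy) hx

theorem neg_one_pow_mul_sin_sub_sinTaylor_nonneg (k : ℕ) {x : ℝ} (hx : 0 ≤ x) :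
    0 ≤ (-1) ^ (k + 1) * (sin x - sinTaylor (k + 1) x) :=
  neg_one_pow_mul_sin_sub_sinTaylor_nonneg_of_cos
    (fun _ hy => neg_one_pow_mul_cos_sub_cosTaylor_nonneg k hy) hx

theorem sinTaylor_three (x : ℝ) : sinTaylor 3 x = x - x ^ 3 / 6 + x ^ 5 / 120 := by
  simp only [sinTaylor, sum_range_succ, sum_range_zero]
  norm_num [factorial, sub_eq_add_neg, neg_div]

theorem sinTaylor_four (x : ℝ) :
    sinTaylor 4 x = x - x ^ 3 / 6 + x ^ 5 / 120 - x ^ 7 / 5040 := by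
  simp only [sinTaylor, sum_range_succ, sum_range_zero]
  norm_num [factorial, sub_eq_add_neg, neg_div]

theorem sinc_le_of_pos {x : ℝ} (hx : 0 < x) : sinc x ≤ 1 - x ^ 2 / 6 + x ^ 4 / 120 := by
  have h := neg_one_pow_mul_sin_sub_sinTaylor_nonneg 2 hx.le
  rw [sinTaylor_three] at h
  rw [sinc_of_ne_zero hx.ne', div_le_iff₀ hx]
  linarith

theorem le_sinc_of_pos {x : ℝ} (hx : 0 < x) :
    1 - x ^ 2 / 6 + x ^ 4 / 120 - x ^ 6 / 5040 ≤ sinc x := by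
  have h := neg_one_pow_mul_sin_sub_sinTaylor_nonneg 3 hx.le
  rw [sinTaylor_four] at h
  rw [sinc_of_ne_zero hx.ne', le_div_iff₀ hx]
  linarith

end Real

-- What the Taylor bounds on `sinc` of degree 4 and 6 give for `seqA n`, with `u = (2n+1)⁻²`.
noncomputable def seqALowerBound (u : ℝ) : ℝ :=
  (π ^ 2 - 2) / 24 + (π ^ 2 / 72 - π ^ 4 / 480) * u - π ^ 4 / 1440 * u ^ 2

noncomputable def seqAUpperBound (u : ℝ) : ℝ :=
  seqALowerBound u + π ^ 6 / 20160 * u ^ 2 + π ^ 6 / 60480 * u ^ 3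

theorem seqA_eq_sinc (n : ℕ) :
    seqA n = (2 * n + 1) ^ 2 / 4 - ((2 * n + 1) ^ 2 / 4 + 1 / 12) * sinc (π / (2 * n + 1)) := by
  rw [seqA, sinc_of_ne_zero (by positivity)]
  ring

theorem seqALowerBound_le_seqA (n : ℕ) : seqALowerBound ((2 * n + 1) ^ 2)⁻¹ ≤ seqA n := by
  have hm : (0 : ℝ) < 2 * n + 1 := by positivity
  set m : ℝ := 2 * n + 1
  have hsinc := sinc_le_of_pos (x := π / m) (by positivity)
  calc seqALowerBound (m ^ 2)⁻¹
      = m ^ 2 / 4 - (m ^ 2 / 4 + 1 / 12) * (1 - (π / m) ^ 2 / 6 + (π / m) ^ 4 / 120) := by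
        unfold seqALowerBound; field_simp; ring
    _ ≤ m ^ 2 / 4 - (m ^ 2 / 4 + 1 / 12) * sinc (π / m) := by gcongr
    _ = seqA n := (seqA_eq_sinc n).symm

theorem seqA_le_seqAUpperBound (n : ℕ) : seqA n ≤ seqAUpperBound ((2 * n + 1) ^ 2)⁻¹ := by
  have hm : (0 : ℝ) < 2 * n + 1 := by positivity
  set m : ℝ := 2 * n + 1
  have hsinc := le_sinc_of_pos (x := π / m) (by positivity)
  calc seqA n = m ^ 2 / 4 - (m ^ 2 / 4 + 1 / 12) * sinc (π / m) := seqA_eq_sinc n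
    _ ≤ m ^ 2 / 4 - (m ^ 2 / 4 + 1 / 12) *
        (1 - (π / m) ^ 2 / 6 + (π / m) ^ 4 / 120 - (π / m) ^ 6 / 5040) := by gcongr
    _ = seqAUpperBound (m ^ 2)⁻¹ := by
        unfold seqAUpperBound seqALowerBound; field_simp; ring

theorem seqALowerBound_sub_seqALowerBound_ge {u v : ℝ} (hv : 0 ≤ v) (hvu : v ≤ u) :
    (π ^ 4 / 480 - π ^ 2 / 72) * (u - v) ≤ seqALowerBound v - seqALowerBound u := by
  have : 0 ≤ π ^ 4 / 1440 * (u ^ 2 - v ^ 2) := by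
    have : v ^ 2 ≤ u ^ 2 := by gcongr
    exact mul_nonneg (by positivity) (by linarith)
  unfold seqALowerBound
  linarith

theorem pi_pow_six_div_add_le_pi_pow_four_div_sub :
    π ^ 6 / 20160 + π ^ 6 / 60480 / 9 ≤ π ^ 4 / 480 - π ^ 2 / 72 := by
  have h1 : 9.8696 < π ^ 2 := by nlinarith [pi_gt_d6]
  have h2 : π ^ 2 < 9.8697 := by nlinarith [pi_lt_d6, pi_pos]
  have : π ^ 2 * (π ^ 2 * (1 / 20160 + 1 / 544320)) ≤ π ^ 2 * (π ^ 2 / 480 - 1 / 72) := by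
    gcongr
    nlinarith
  nlinarith

theorem seqAUpperBound_sub_seqALowerBound_le {u : ℝ} (hu : u ≤ 1 / 9) :
    seqAUpperBound u - seqALowerBound u ≤ (π ^ 4 / 480 - π ^ 2 / 72) * u ^ 2 :=
  calc seqAUpperBound u - seqALowerBound u = (π ^ 6 / 20160 + π ^ 6 / 60480 * u) * u ^ 2 := by
        unfold seqAUpperBound; ring
    _ ≤ (π ^ 6 / 20160 + π ^ 6 / 60480 * (1 / 9)) * u ^ 2 := by gcongr
    _ ≤ (π ^ 4 / 480 - π ^ 2 / 72) * u ^ 2 := by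
        gcongr
        linarith [pi_pow_six_div_add_le_pi_pow_four_div_sub]

theorem seqAUpperBound_lt_seqALowerBound {m : ℝ} (hm : 3 ≤ m) :
    seqAUpperBound (m ^ 2)⁻¹ < seqALowerBound ((m + 2) ^ 2)⁻¹ := by
  have hκ : 0 < π ^ 4 / 480 - π ^ 2 / 72 := by
    linarith [pi_pow_six_div_add_le_pi_pow_four_div_sub, show 0 < π ^ 6 by positivity]
  have hvu : ((m + 2) ^ 2)⁻¹ ≤ (m ^ 2)⁻¹ := by gcongr; linarith
  have hu : (m ^ 2)⁻¹ ≤ 1 / 9 := by rw [one_div]; gcongr; nlinarith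
  have hgap : ((m ^ 2)⁻¹) ^ 2 < (m ^ 2)⁻¹ - ((m + 2) ^ 2)⁻¹ := by
    have : (m ^ 2)⁻¹ - ((m + 2) ^ 2)⁻¹ - ((m ^ 2)⁻¹) ^ 2
        = ((4 * m + 4) * m ^ 2 - (m + 2) ^ 2) / (m ^ 4 * (m + 2) ^ 2) := by
      field_simp; ring
    have : 0 < ((4 * m + 4) * m ^ 2 - (m + 2) ^ 2) / (m ^ 4 * (m + 2) ^ 2) := by
      apply div_pos _ (by positivity); nlinarith
    linarith
  calc seqAUpperBound (m ^ 2)⁻¹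
      ≤ seqALowerBound (m ^ 2)⁻¹ + (π ^ 4 / 480 - π ^ 2 / 72) * ((m ^ 2)⁻¹) ^ 2 := by
        linarith [seqAUpperBound_sub_seqALowerBound_le hu]
    _ < seqALowerBound (m ^ 2)⁻¹ +
        (π ^ 4 / 480 - π ^ 2 / 72) * ((m ^ 2)⁻¹ - ((m + 2) ^ 2)⁻¹) := by gcongr
    _ ≤ seqALowerBound ((m + 2) ^ 2)⁻¹ := by
        linarith [seqALowerBound_sub_seqALowerBound_ge (by positivity) hvu]

theorem seqA_lt_seqA_succ {n : ℕ} (hn : 1 ≤ n) : seqA n < seqA (n + 1) := by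
  have hm : (3 : ℝ) ≤ 2 * n + 1 := by
    have : (1 : ℝ) ≤ n := by exact_mod_cast hn
    linarith
  calc seqA n ≤ seqAUpperBound ((2 * n + 1) ^ 2)⁻¹ := seqA_le_seqAUpperBound n
    _ < seqALowerBound ((2 * n + 1 + 2) ^ 2)⁻¹ := seqAUpperBound_lt_seqALowerBound hm
    _ = seqALowerBound ((2 * ↑(n + 1) + 1) ^ 2)⁻¹ := by push_cast; ring_nf
    _ ≤ seqA (n + 1) := seqALowerBound_le_seqA (n + 1)

theorem strictMonoOn_seqA : StrictMonoOn seqA (Set.Ici 1) :=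
  strictMonoOn_of_lt_succ Set.ordConnected_Ici fun _ _ hn _ => seqA_lt_seqA_succ hn

theorem tendsto_seqA : Tendsto seqA atTop (nhds ((π ^ 2 - 2) / 24)) := by
  have hu : Tendsto (fun n : ℕ => ((2 * n + 1 : ℝ) ^ 2)⁻¹) atTop (nhds 0) := by
    refine tendsto_inv_atTop_zero.comp
      (tendsto_atTop_mono (fun n => ?_) tendsto_natCast_atTop_atTop)
    nlinarith [(n.cast_nonneg : (0 : ℝ) ≤ n)]
  have hlo : Continuous seqALowerBound := by unfold seqALowerBound; fun_prop
  have hhi : Continuous seqAUpperBound := by unfold seqAUpperBound; fun_prop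
  exact tendsto_of_tendsto_of_tendsto_of_le_of_le
    ((hlo.tendsto' 0 _ (by simp [seqALowerBound])).comp hu)
    ((hhi.tendsto' 0 _ (by simp [seqAUpperBound, seqALowerBound])).comp hu)
    seqALowerBound_le_seqA seqA_le_seqAUpperBound

theorem seqA_one : seqA 1 = 9 / 4 - 7 * √3 / (2 * π) := by
  rw [seqA, Nat.cast_one, show (2 * 1 + 1 : ℝ) = 3 by norm_num, sin_pi_div_three]
  field_simp
  ring

theorem le_seqA_one : 0.32 ≤ seqA 1 := by
  have hs3 : √3 < 1.7321 := by
    rw [sqrt_lt' (by norm_num)]; norm_num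
  have : 7 * √3 / (2 * π) ≤ 1.93 := by
    rw [div_le_iff₀ (by positivity)]
    nlinarith [pi_gt_d4]
  rw [seqA_one]
  linarith

theorem seqA_properties :
    StrictMonoOn seqA (Set.Ici 1) ∧
    Filter.Tendsto seqA Filter.atTop (nhds ((Real.pi^2 - 2) / 24)) ∧
    0.32 ≤ seqA 1 ∧ (Real.pi^2 - 2) / 24 ≤ 0.33 :=
  ⟨strictMonoOn_seqA, tendsto_seqA, le_seqA_one, by nlinarith [pi_lt_d4, pi_pos]⟩
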